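/- arXiv:1912.09899 — 2 statements merged into one kernel-verified Lean document; each statement's English description precedes it below -/
import Mathlib

section
/- In the slab setting, let q_x ∈ [0,1] satisfy q_x ≤ rₓ(q₁, q₂). Then there exist q₂′ ∈ [q₁, q₂] with rₓ(q₁, q₂′) = q_x and q₁′ ∈ [q₁, q₂] with rₓ(q₁′, q₂) = q_x. Moreover, for any such q₁′, q₂′ and any q_y ∈ [0,1], if (r_y(q₁, q₂′) − q_y)·(r_y(q₁′, q₂) − q_y) ≤ 0, then there exist q₁″, q₂″ ∈ [q₁, q₂] with q₁″ ≤ q₂″ such that rₓ(q₁″, q₂″) = q_x and r_y(q₁″, q₂″) = q_y. -/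
open MeasureTheory ProbabilityTheory Real Filter

/-- The standard normal cumulative distribution function Φ. -/
noncomputable def Phi (t : ℝ) : ℝ := (gaussianReal 0 1 (Set.Iic t)).toReal

/-- The inverse Φ⁻¹ of the standard normal CDF (meaningful on (0,1)). -/
noncomputable def PhiInv : ℝ → ℝ := Function.invFun Phi

/-- The Gaussian measure N(m, σ²I) on ℝ^d. -/
noncomputable def gaussianVec {d : ℕ} (m : Fin d → ℝ) (σ : ℝ) :
    Measure (Fin d → ℝ) :=
  Measure.pi fun i => gaussianReal (m i) (Real.toNNReal (σ ^ 2))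

/-- Dot product on ℝ^d. -/
def dotp {d : ℕ} (a b : Fin d → ℝ) : ℝ := ∑ i, a i * b i

/-- Euclidean (ℓ₂) norm on ℝ^d. -/
noncomputable def l2norm {d : ℕ} (a : Fin d → ℝ) : ℝ := Real.sqrt (∑ i, a i ^ 2)

/-- Φ⁻¹ extended to EReal with the conventions Φ⁻¹(0) = −∞, Φ⁻¹(1) = +∞. -/
noncomputable def PhiInvE (p : ℝ) : EReal :=
  if p ≤ 0 then ⊥ else if 1 ≤ p then ⊤ else ((PhiInv p : ℝ) : EReal)

/-- Φ extended to EReal with Φ(−∞) = 0 and Φ(+∞) = 1. -/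
noncomputable def PhiE (e : EReal) : ℝ :=
  if e = ⊥ then 0 else if e = ⊤ then 1 else Phi e.toReal

/-- The slab C(a,b) = {z : σ‖δ‖₂ Φ⁻¹(1−b) < δᵀ(z−x) ≤ σ‖δ‖₂ Φ⁻¹(1−a)},
with the conventions Φ⁻¹(0) = −∞ and Φ⁻¹(1) = +∞ (assuming σ‖δ‖₂ > 0, the
defining inequalities are stated for the normalized quantity δᵀ(z−x)/(σ‖δ‖₂)). -/
noncomputable def slab {d : ℕ} (σ : ℝ) (x δ : Fin d → ℝ) (a b : ℝ) :
    Set (Fin d → ℝ) :=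
  {z | PhiInvE (1 - b) < ((dotp δ (z - x) / (σ * l2norm δ) : ℝ) : EReal) ∧
      ((dotp δ (z - x) / (σ * l2norm δ) : ℝ) : EReal) ≤ PhiInvE (1 - a)}

/-!
Push the two Gaussians, restricted to `C'`, forward along
`slabLevel z = 1 - Φ(δᵀ(z - x) / (σ‖δ‖₂))`; the slab `C(a,b)` is the preimage of `[a, b)`, so
`rₓ(a,b) = ν[a,b)` and `r_y(a,b) = ν'[a,b)` for two finite measures `ν`, `ν'` on `ℝ`.
Level sets of `slabLevel` are hyperplanes, hence Gaussian-null, so `ν` has no atoms; the two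
Gaussians are mutually absolutely continuous, so `ν' ≪ ν`. Hence `F = ν(-∞, ·]` is continuous and
monotone, and `G = ν'(-∞, ·]` is constant wherever `F` is, so `G = h ∘ F` for a continuous `h`.
The intermediate value theorem for `u ↦ h (u + q_x) - h u` between `u = F q₁` and `u = F q₁′`
produces `q₁″ ≤ q₂″` with `F q₂″ - F q₁″ = q_x` and `G q₂″ - G q₁″ = q_y`.
-/

open Set

namespace MeasureTheory

theorem Measure.AbsolutelyContinuous.pi_fin :
    ∀ {n : ℕ} {α : Fin n → Type*} [∀ i, MeasurableSpace (α i)] {μ ν : ∀ i, Measure (α i)}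
      [∀ i, SigmaFinite (μ i)] [∀ i, SigmaFinite (ν i)],
      (∀ i, μ i ≪ ν i) → Measure.pi μ ≪ Measure.pi ν
  | 0, _, _, μ, ν, _, _, _ => by rw [Measure.pi_of_empty μ, Measure.pi_of_empty ν]
  | n + 1, α, _, μ, ν, _, _, h => by
    have ih : Measure.pi (fun j => μ (Fin.succAbove 0 j)) ≪
        Measure.pi (fun j => ν (Fin.succAbove 0 j)) :=
      pi_fin fun j => h _
    rw [← ((measurePreserving_piFinSuccAbove μ 0).symm _).map_eq,
      ← ((measurePreserving_piFinSuccAbove ν 0).symm _).map_eq]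
    exact ((h 0).prod ih).map (MeasurableEquiv.measurable _)

theorem Measure.addHaar_preimage_singleton_eq_zero {E : Type*} [NormedAddCommGroup E]
    [NormedSpace ℝ E] [MeasurableSpace E] [BorelSpace E] [FiniteDimensional ℝ E]
    (μ : Measure E) [μ.IsAddHaarMeasure] {φ : E →ₗ[ℝ] ℝ} (hφ : φ ≠ 0) (r : ℝ) :
    μ (φ ⁻¹' {r}) = 0 := by
  obtain ⟨z₀, hz₀⟩ := φ.surjective_of_ne_zero hφ r
  have : φ ⁻¹' {r} = (· + -z₀) ⁻¹' (LinearMap.ker φ : Set E) := by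
    ext z; simp [hz₀, add_neg_eq_zero]
  rw [this, measure_preimage_add_right]
  exact addHaar_submodule μ _ (by rwa [Ne, LinearMap.ker_eq_top])

section FiniteMeasureOnReal

variable {ν : Measure ℝ} [IsFiniteMeasure ν] {a b c : ℝ}

theorem measureReal_Iic_add_Ioc (hab : a ≤ b) :
    ν.real (Iic a) + ν.real (Ioc a b) = ν.real (Iic b) := by
  rw [← measureReal_union (Iic_disjoint_Ioc le_rfl) measurableSet_Ioc, Iic_union_Ioc_eq_Iic hab]

variable [NullSingletonClass ν]

theorem measureReal_Ico_eq_sub (hab : a ≤ b) :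
    ν.real (Ico a b) = ν.real (Iic b) - ν.real (Iic a) := by
  rw [measureReal_congr Ico_ae_eq_Ioc, ← measureReal_Iic_add_Ioc hab]; ring

theorem continuous_measureReal_Iic : Continuous fun t => ν.real (Iic t) := by
  refine continuous_iff_continuousAt.2 fun t => ?_
  have hIoc : ContinuousOn (fun s => ν.real (Ioc (t - 1) s)) (Icc (t - 1) (t + 1)) := by
    simpa using intervalIntegral.continuousOn_primitive (μ := ν) (f := fun _ => (1 : ℝ))
      (integrableOn_const (measure_ne_top _ _))
  have hsplit : ∀ s ∈ Icc (t - 1) (t + 1),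
      ν.real (Iic s) = ν.real (Iic (t - 1)) + ν.real (Ioc (t - 1) s) :=
    fun s hs => (measureReal_Iic_add_Ioc hs.1).symm
  exact ((continuousOn_const.add hIoc).congr hsplit).continuousAt
    (Icc_mem_nhds (by linarith) (by linarith))

end FiniteMeasureOnReal

end MeasureTheory

theorem MonotoneOn.exists_continuous_comp_eq {f g : ℝ → ℝ} {a b : ℝ} (hab : a ≤ b)
    (hf : ContinuousOn f (Icc a b)) (hf_mono : MonotoneOn f (Icc a b))
    (hg : ContinuousOn g (Icc a b))
    (hfg : ∀ s ∈ Icc a b, ∀ t ∈ Icc a b, f s = f t → g s = g t) :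
    ∃ h : ℝ → ℝ, Continuous h ∧ ∀ t ∈ Icc a b, h (f t) = g t := by
  have ha : a ∈ Icc a b := left_mem_Icc.2 hab
  have hb : b ∈ Icc a b := right_mem_Icc.2 hab
  let F : Icc a b → Icc (f a) (f b) := fun t =>
    ⟨f t, hf_mono ha t.2 t.2.1, hf_mono t.2 hb t.2.2⟩
  have hF_cont : Continuous F := hf.domRestrict.subtype_mk _
  have hF_surj : Function.Surjective F := fun u => by
    obtain ⟨t, ht, hft⟩ := intermediate_value_Icc hab hf u.2
    exact ⟨⟨t, ht⟩, Subtype.ext hft⟩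
  let H : Icc (f a) (f b) → ℝ := fun u => g (hF_surj u).choose
  have hHF : H ∘ F = (Icc a b).domRestrict g := funext fun t =>
    hfg _ (hF_surj (F t)).choose.2 _ t.2 (congrArg Subtype.val (hF_surj (F t)).choose_spec)
  have hH : Continuous H :=
    (Topology.IsQuotientMap.of_surjective_continuous hF_surj hF_cont).continuous_iff.2
      (hHF ▸ hg.domRestrict)
  refine ⟨IccExtend (hf_mono ha hb hab) H, hH.Icc_extend', fun t ht => ?_⟩
  rw [IccExtend_of_mem _ _ (F ⟨t, ht⟩).2]
  exact congrFun hHF ⟨t, ht⟩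

theorem exists_Icc_sub_eq_of_mul_nonpos {f g : ℝ → ℝ} {a b s t c y : ℝ} (hab : a ≤ b)
    (hf : ContinuousOn f (Icc a b)) (hf_mono : MonotoneOn f (Icc a b))
    (hg : ContinuousOn g (Icc a b))
    (hfg : ∀ s ∈ Icc a b, ∀ t ∈ Icc a b, f s = f t → g s = g t)
    (hs : s ∈ Icc a b) (ht : t ∈ Icc a b) (hfs : f s - f a = c) (hft : f b - f t = c)
    (hy : (g s - g a - y) * (g b - g t - y) ≤ 0) :
    ∃ u v, u ∈ Icc a b ∧ v ∈ Icc a b ∧ u ≤ v ∧ f v - f u = c ∧ g v - g u = y := by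
  have ha : a ∈ Icc a b := left_mem_Icc.2 hab
  have hb : b ∈ Icc a b := right_mem_Icc.2 hab
  have hc : 0 ≤ c := hfs ▸ sub_nonneg.2 (hf_mono ha hs hs.1)
  obtain ⟨h, hh, hhf⟩ := hf_mono.exists_continuous_comp_eq hab hf hg hfg
  have hG_a : h (f a + c) - h (f a) = g s - g a := by
    rw [← hfs, add_sub_cancel, hhf s hs, hhf a ha]
  have hG_t : h (f t + c) - h (f t) = g b - g t := by
    rw [← hft, add_sub_cancel, hhf b hb, hhf t ht]
  have hy_mem : y ∈ uIcc (h (f a + c) - h (f a)) (h (f t + c) - h (f t)) := by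
    rw [hG_a, hG_t, mem_uIcc]
    rcases mul_nonpos_iff.1 hy with ⟨h₁, h₂⟩ | ⟨h₁, h₂⟩
    · right; constructor <;> linarith
    · left; constructor <;> linarith
  obtain ⟨w, hw, hGw⟩ := intermediate_value_uIcc
    ((hh.comp (continuous_add_const c)).sub hh).continuousOn hy_mem
  rw [uIcc_of_le (hf_mono ha ht ht.1)] at hw
  obtain ⟨u, hu, hfu⟩ := intermediate_value_Icc hab hf ⟨hw.1, hw.2.trans (hf_mono ht hb ht.2)⟩
  obtain ⟨v, hv, hfv⟩ := intermediate_value_Icc hu.2 (hf.mono (Icc_subset_Icc_left hu.1))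
    (show w + c ∈ Icc (f u) (f b) from ⟨by linarith, by linarith [hw.2]⟩)
  have hv' : v ∈ Icc a b := ⟨hu.1.trans hv.1, hv.2⟩
  refine ⟨u, v, hu, hv', hv.1, by linarith, ?_⟩
  rw [← hhf v hv', ← hhf u hu, hfv, hfu]
  exact hGw

namespace MeasureTheory

variable {ν : Measure ℝ} [IsFiniteMeasure ν] [NullSingletonClass ν] {a b c : ℝ}

theorem exists_measureReal_Ico_left_eq (hab : a ≤ b) (hc₀ : 0 ≤ c)
    (hc : c ≤ ν.real (Ico a b)) : ∃ s ∈ Icc a b, ν.real (Ico a s) = c := by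
  rw [measureReal_Ico_eq_sub hab] at hc
  obtain ⟨s, hs, hνs⟩ := intermediate_value_Icc hab
    (continuous_measureReal_Iic.sub continuous_const).continuousOn ⟨by simpa using hc₀, hc⟩
  exact ⟨s, hs, by rwa [measureReal_Ico_eq_sub hs.1]⟩

theorem exists_measureReal_Ico_right_eq (hab : a ≤ b) (hc₀ : 0 ≤ c)
    (hc : c ≤ ν.real (Ico a b)) : ∃ t ∈ Icc a b, ν.real (Ico t b) = c := by
  rw [measureReal_Ico_eq_sub hab] at hc
  obtain ⟨t, ht, hνt⟩ := intermediate_value_Icc' hab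
    (continuous_const.sub continuous_measureReal_Iic).continuousOn ⟨by simpa using hc₀, hc⟩
  exact ⟨t, ht, by rwa [measureReal_Ico_eq_sub ht.2]⟩

theorem exists_measureReal_Ico_eq_of_mul_nonpos {ν' : Measure ℝ} [IsFiniteMeasure ν']
    (hν' : ν' ≪ ν) {s t y : ℝ} (hab : a ≤ b) (hs : s ∈ Icc a b) (ht : t ∈ Icc a b)
    (hνs : ν.real (Ico a s) = c) (hνt : ν.real (Ico t b) = c)
    (hy : (ν'.real (Ico a s) - y) * (ν'.real (Ico t b) - y) ≤ 0) :
    ∃ u v, u ∈ Icc a b ∧ v ∈ Icc a b ∧ u ≤ v ∧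
      ν.real (Ico u v) = c ∧ ν'.real (Ico u v) = y := by
  have : NullSingletonClass ν' := ⟨fun r => hν' (measure_singleton r)⟩
  have hfg : ∀ u v, u ≤ v → ν.real (Iic u) = ν.real (Iic v) →
      ν'.real (Iic u) = ν'.real (Iic v) := by
    intro u v huv h
    have hν : ν (Ico u v) = 0 := by
      rw [← measureReal_eq_zero_iff, measureReal_Ico_eq_sub huv, h, sub_self]
    have hν'0 := (measureReal_eq_zero_iff).2 (hν' hν)
    rw [measureReal_Ico_eq_sub huv] at hν'0
    linarith
  simp only [measureReal_Ico_eq_sub hs.1, measureReal_Ico_eq_sub ht.2] at hy hνs hνt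
  obtain ⟨u, v, hu, hv, huv, hνuv, hν'uv⟩ := exists_Icc_sub_eq_of_mul_nonpos hab
    continuous_measureReal_Iic.continuousOn
    (fun u _ v _ huv => measureReal_mono (Iic_subset_Iic.2 huv))
    continuous_measureReal_Iic.continuousOn
    (fun u _ v _ h => (le_total u v).elim (hfg u v · h) (fun hvu => (hfg v u hvu h.symm).symm))
    hs ht hνs hνt hy
  rw [← measureReal_Ico_eq_sub huv] at hνuv hν'uv
  exact ⟨u, v, hu, hv, huv, hνuv, hν'uv⟩

end MeasureTheory

theorem continuous_phi : Continuous Phi :=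
  haveI := nullSingletonClass_gaussianReal (μ := 0) one_ne_zero
  continuous_measureReal_Iic

theorem strictMono_phi : StrictMono Phi := fun s t hst => by
  have hpos : 0 < (gaussianReal 0 1).real (Ioc s t) := by
    refine ENNReal.toReal_pos (fun h => ?_) (measure_ne_top _ _)
    have := gaussianReal_absolutelyContinuous' 0 one_ne_zero h
    simp at this
    linarith
  have := measureReal_Iic_add_Ioc (ν := gaussianReal 0 1) hst.le
  change (gaussianReal 0 1).real _ < (gaussianReal 0 1).real _
  linarith

theorem phi_pos (t : ℝ) : 0 < Phi t := by
  have : 0 ≤ Phi (t - 1) := measureReal_nonneg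
  linarith [strictMono_phi (sub_one_lt t)]

theorem phi_lt_one (t : ℝ) : Phi t < 1 := by
  have : Phi (t + 1) ≤ 1 := measureReal_le_one
  linarith [strictMono_phi (lt_add_one t)]

theorem phi_phiInv {p : ℝ} (hp₀ : 0 < p) (hp₁ : p < 1) : Phi (PhiInv p) = p := by
  have hcdf : ⇑(cdf (gaussianReal 0 1)) = Phi := funext (cdf_eq_real _)
  obtain ⟨s, hs⟩ :=
    ((hcdf ▸ tendsto_cdf_atBot (μ := gaussianReal 0 1)).eventually (gt_mem_nhds hp₀)).exists
  obtain ⟨t, ht⟩ :=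
    ((hcdf ▸ tendsto_cdf_atTop (μ := gaussianReal 0 1)).eventually (lt_mem_nhds hp₁)).exists
  exact Function.invFun_eq
    (mem_range_of_exists_le_of_exists_ge continuous_phi ⟨s, hs.le⟩ ⟨t, ht.le⟩)

theorem phiInvE_lt_coe_iff (p r : ℝ) : PhiInvE p < r ↔ p < Phi r := by
  unfold PhiInvE
  split_ifs with h₀ h₁
  · simpa using h₀.trans_lt (phi_pos r)
  · simpa using ((phi_lt_one r).trans_le h₁).le
  · rw [EReal.coe_lt_coe_iff, ← strictMono_phi.lt_iff_lt, phi_phiInv (not_le.1 h₀) (not_le.1 h₁)]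

instance isProbabilityMeasure_gaussianVec {d : ℕ} (m : Fin d → ℝ) (σ : ℝ) :
    IsProbabilityMeasure (gaussianVec m σ) := by
  unfold gaussianVec; infer_instance

theorem gaussianVec_absolutelyContinuous {d : ℕ} {σ : ℝ} (hσ : σ ≠ 0) (m m' : Fin d → ℝ) :
    gaussianVec m σ ≪ gaussianVec m' σ := by
  have hv : (σ ^ 2).toNNReal ≠ 0 := by positivity
  exact Measure.AbsolutelyContinuous.pi_fin fun i =>
    (gaussianReal_absolutelyContinuous _ hv).trans (gaussianReal_absolutelyContinuous' _ hv)

theorem gaussianVec_absolutelyContinuous_volume {d : ℕ} {σ : ℝ} (hσ : σ ≠ 0) (m : Fin d → ℝ) :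
    gaussianVec m σ ≪ volume := by
  have hv : (σ ^ 2).toNNReal ≠ 0 := by positivity
  rw [volume_pi]
  exact Measure.AbsolutelyContinuous.pi_fin fun i => gaussianReal_absolutelyContinuous _ hv

theorem l2norm_pos {d : ℕ} {δ : Fin d → ℝ} (hδ : δ ≠ 0) : 0 < l2norm δ := by
  have hsum : ∑ i, δ i ^ 2 = dotp δ δ := by simp only [dotp, sq]
  refine Real.sqrt_pos.2 (lt_of_le_of_ne (Finset.sum_nonneg fun i _ => sq_nonneg _) ?_)
  rw [hsum]
  exact Ne.symm (dotProduct_self_eq_zero.not.2 hδ)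

noncomputable def slabLevel {d : ℕ} (σ : ℝ) (x δ : Fin d → ℝ) (z : Fin d → ℝ) : ℝ :=
  1 - Phi (dotp δ (z - x) / (σ * l2norm δ))

theorem slab_eq_preimage_slabLevel {d : ℕ} (σ : ℝ) (x δ : Fin d → ℝ) (a b : ℝ) :
    slab σ x δ a b = slabLevel σ x δ ⁻¹' Ico a b := by
  ext z
  simp only [slab, slabLevel, mem_ofPred_eq, mem_preimage, mem_Ico, phiInvE_lt_coe_iff, ← not_lt]
  constructor <;> rintro ⟨h₁, h₂⟩ <;> constructor <;> linarith

theorem measurable_slabLevel {d : ℕ} (σ : ℝ) (x δ : Fin d → ℝ) : Measurable (slabLevel σ x δ) :=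
  (continuous_const.sub (continuous_phi.comp (by unfold dotp; fun_prop))).measurable

theorem gaussianVec_slabLevel_preimage_singleton {d : ℕ} {σ : ℝ} (hσ : σ ≠ 0) (m x : Fin d → ℝ)
    {δ : Fin d → ℝ} (hδ : δ ≠ 0) (c : ℝ) : gaussianVec m σ (slabLevel σ x δ ⁻¹' {c}) = 0 := by
  rcases eq_empty_or_nonempty (slabLevel σ x δ ⁻¹' {c}) with h | ⟨z₀, hz₀⟩
  · rw [h, measure_empty]
  have hk : σ * l2norm δ ≠ 0 := mul_ne_zero hσ (l2norm_pos hδ).ne'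
  have hφ : dotProductBilin ℝ ℝ δ ≠ 0 := fun h =>
    hδ (dotProduct_self_eq_zero.1 (LinearMap.congr_fun h δ))
  have hsub : slabLevel σ x δ ⁻¹' {c} ⊆ dotProductBilin ℝ ℝ δ ⁻¹' {dotp δ z₀} := by
    intro z hz
    have h := strictMono_phi.injective (sub_right_injective (hz.trans hz₀.symm))
    rw [div_left_inj' hk] at h
    have h' : δ ⬝ᵥ z - δ ⬝ᵥ x = δ ⬝ᵥ z₀ - δ ⬝ᵥ x := by
      rw [← dotProduct_sub, ← dotProduct_sub]; exact h
    exact sub_left_injective h'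
  exact measure_mono_null hsub (gaussianVec_absolutelyContinuous_volume hσ m
    (Measure.addHaar_preimage_singleton_eq_zero volume hφ _))

theorem measureReal_map_slabLevel_Ico {d : ℕ} (σ : ℝ) (x δ : Fin d → ℝ)
    (μ : Measure (Fin d → ℝ)) (C' : Set (Fin d → ℝ)) (a b : ℝ) :
    ((μ.restrict C').map (slabLevel σ x δ)).real (Ico a b) = (μ (C' ∩ slab σ x δ a b)).toReal := by
  have hW := measurable_slabLevel σ x δ
  rw [measureReal_def, Measure.map_apply hW measurableSet_Ico,
    Measure.restrict_apply (hW measurableSet_Ico), slab_eq_preimage_slabLevel, inter_comm]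

theorem slab_intermediate_value_general
    {d : ℕ} (σ : ℝ) (hσ : 0 < σ)
    (x δ : Fin d → ℝ) (hδ : δ ≠ 0)
    (q1 q2 : ℝ) (hq12 : q1 < q2)
    (C' : Set (Fin d → ℝ))
    (rX rY : ℝ → ℝ → ℝ)
    (hrX : ∀ a b, rX a b = (gaussianVec x σ (C' ∩ slab σ x δ a b)).toReal)
    (hrY : ∀ a b, rY a b = (gaussianVec (x + δ) σ (C' ∩ slab σ x δ a b)).toReal)
    (qx : ℝ) (hqx : qx ∈ Set.Icc (0 : ℝ) 1) (hqxle : qx ≤ rX q1 q2) :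
    (∃ q2' ∈ Set.Icc q1 q2, rX q1 q2' = qx) ∧
    (∃ q1' ∈ Set.Icc q1 q2, rX q1' q2 = qx) ∧
    (∀ q1' q2', q1' ∈ Set.Icc q1 q2 → q2' ∈ Set.Icc q1 q2 →
      rX q1 q2' = qx → rX q1' q2 = qx →
      ∀ qy ∈ Set.Icc (0 : ℝ) 1,
        (rY q1 q2' - qy) * (rY q1' q2 - qy) ≤ 0 →
        ∃ q1'' q2'', q1'' ∈ Set.Icc q1 q2 ∧ q2'' ∈ Set.Icc q1 q2 ∧
          q1'' ≤ q2'' ∧ rX q1'' q2'' = qx ∧ rY q1'' q2'' = qy) := by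
  have hW := measurable_slabLevel σ x δ
  set ν := ((gaussianVec x σ).restrict C').map (slabLevel σ x δ)
  set ν' := ((gaussianVec (x + δ) σ).restrict C').map (slabLevel σ x δ)
  have : NullSingletonClass ν := ⟨fun c => by
    rw [Measure.map_apply hW (measurableSet_singleton c)]
    exact le_antisymm ((Measure.restrict_apply_le _ _).trans_eq
      (gaussianVec_slabLevel_preimage_singleton hσ.ne' x x hδ c)) zero_le⟩
  have hν' : ν' ≪ ν := ((gaussianVec_absolutelyContinuous hσ.ne' _ _).restrict C').map hW
  obtain rfl : rX = fun a b => ν.real (Ico a b) :=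
    funext₂ fun a b => (hrX a b).trans (measureReal_map_slabLevel_Ico ..).symm
  obtain rfl : rY = fun a b => ν'.real (Ico a b) :=
    funext₂ fun a b => (hrY a b).trans (measureReal_map_slabLevel_Ico ..).symm
  exact ⟨exists_measureReal_Ico_left_eq hq12.le hqx.1 hqxle,
    exists_measureReal_Ico_right_eq hq12.le hqx.1 hqxle,
    fun _ _ ht hs hνs hνt _ _ hy =>
      exists_measureReal_Ico_eq_of_mul_nonpos hν' hq12.le hs ht hνs hνt hy⟩

/-- Lemma 7 of the paper (intermediate-value construction in the slab setting):
if q_x ≤ rₓ(q₁,q₂) then there are q₂′, q₁′ ∈ [q₁,q₂] with rₓ(q₁,q₂′) = q_x and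
rₓ(q₁′,q₂) = q_x; moreover, for any such q₁′, q₂′ and any q_y, if
(r_y(q₁,q₂′) − q_y)·(r_y(q₁′,q₂) − q_y) ≤ 0 then there exist
q₁″ ≤ q₂″ in [q₁,q₂] with rₓ(q₁″,q₂″) = q_x and r_y(q₁″,q₂″) = q_y. -/
theorem slab_intermediate_value
    {d : ℕ} (hd : 1 ≤ d) (σ : ℝ) (hσ : 0 < σ)
    (x δ : Fin d → ℝ) (hδ : δ ≠ 0)
    (q1 q2 : ℝ) (hq1 : 0 ≤ q1) (hq12 : q1 < q2) (hq2 : q2 ≤ 1)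
    (n : ℕ) (e1 e2 : Fin n → ℝ)
    (he : ∀ i, q1 ≤ e1 i ∧ e1 i ≤ e2 i ∧ e2 i ≤ q2)
    (C' : Set (Fin d → ℝ))
    (hC' : C' = slab σ x δ q1 q2 \ ⋃ i, slab σ x δ (e1 i) (e2 i))
    (rX rY : ℝ → ℝ → ℝ)
    (hrX : ∀ a b, rX a b = (gaussianVec x σ (C' ∩ slab σ x δ a b)).toReal)
    (hrY : ∀ a b, rY a b = (gaussianVec (x + δ) σ (C' ∩ slab σ x δ a b)).toReal)
    (qx : ℝ) (hqx : qx ∈ Set.Icc (0 : ℝ) 1) (hqxle : qx ≤ rX q1 q2) :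
    (∃ q2' ∈ Set.Icc q1 q2, rX q1 q2' = qx) ∧
    (∃ q1' ∈ Set.Icc q1 q2, rX q1' q2 = qx) ∧
    (∀ q1' q2', q1' ∈ Set.Icc q1 q2 → q2' ∈ Set.Icc q1 q2 →
      rX q1 q2' = qx → rX q1' q2 = qx →
      ∀ qy ∈ Set.Icc (0 : ℝ) 1,
        (rY q1 q2' - qy) * (rY q1' q2 - qy) ≤ 0 →
        ∃ q1'' q2'', q1'' ∈ Set.Icc q1 q2 ∧ q2'' ∈ Set.Icc q1 q2 ∧
          q1'' ≤ q2'' ∧ rX q1'' q2'' = qx ∧ rY q1'' q2'' = qy) :=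
  slab_intermediate_value_general σ hσ x δ hδ q1 q2 hq12 C' rX rY hrX hrY qx hqx hqxle
end

section
/- In the slab setting, let q₂° satisfy q₁ ≤ q₂° ≤ q₂ and assume rₓ(q₁, q₂°) > 0. Then r_y(q₁, q₂°) ≥ r_y(q₁, q₂) / ⌈rₓ(q₁, q₂) / rₓ(q₁, q₂°)⌉. -/
open MeasureTheory ProbabilityTheory Real Filter

open scoped NNReal ENNReal

/-!
The likelihood ratio of `N(x + δ, σ²I)` against `N(x, σ²I)` is
`exp ((δᵀ(z - x) - ‖δ‖²/2) / σ²)`, an increasing function of `δᵀ(z - x)`. Split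
`C' ∩ C(q₁, q₂)` into `A = C' ∩ C(q₁, q₂°)` and the part `B` of it lying below `A` in the
direction `δ`; then the ratio on `B` is at most its infimum `K` over `A`. With
`N = ⌈rₓ(q₁, q₂) / rₓ(q₁, q₂°)⌉` we have `Pr(X ∈ B) ≤ (N - 1) Pr(X ∈ A)`, hence
`Pr(Y ∈ B) ≤ K Pr(X ∈ B) ≤ (N - 1) K Pr(X ∈ A) ≤ (N - 1) Pr(Y ∈ A)`.
-/

namespace MeasureTheory

variable {ι : Type*} [Fintype ι] {Ω : ι → Type*} [∀ i, MeasurableSpace (Ω i)]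
  {μ : ∀ i, Measure (Ω i)} [∀ i, IsProbabilityMeasure (μ i)]

theorem lintegral_pi_prod {f : ∀ i, Ω i → ℝ≥0∞} (hf : ∀ i, Measurable (f i)) :
    ∫⁻ z, ∏ i, f i (z i) ∂Measure.pi μ = ∏ i, ∫⁻ t, f i t ∂μ i := by
  rw [lintegral_prod_eq_prod_lintegral_of_indepFun _ _
    (iIndepFun_pi fun i => (hf i).aemeasurable) fun i => (hf i).comp (measurable_pi_apply i)]
  exact Finset.prod_congr rfl fun i _ => (measurePreserving_eval μ i).lintegral_comp (hf i)

theorem Measure.pi_eq_withDensity {ν : ∀ i, Measure (Ω i)} [∀ i, SigmaFinite (ν i)]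
    {f : ∀ i, Ω i → ℝ≥0∞} (hf : ∀ i, Measurable (f i))
    (hν : ∀ i, ν i = (μ i).withDensity (f i)) :
    Measure.pi ν = (Measure.pi μ).withDensity fun z => ∏ i, f i (z i) := by
  classical
  refine Measure.pi_eq fun s hs => ?_
  have hind : (Set.univ.pi s).indicator (fun z => ∏ i, f i (z i))
      = fun z => ∏ i, (s i).indicator (f i) (z i) := by
    ext z
    simp only [Set.indicator_apply, Set.mem_univ_pi, Finset.prod_ite_zero, Finset.mem_univ,
      true_implies]
  rw [withDensity_apply _ (.univ_pi hs), ← lintegral_indicator (.univ_pi hs), hind,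
    lintegral_pi_prod fun i => (hf i).indicator (hs i)]
  simp_rw [hν, withDensity_apply _ (hs _), lintegral_indicator (hs _)]

end MeasureTheory

theorem ProbabilityTheory.gaussianReal_add_eq_withDensity (m c : ℝ) {v : ℝ≥0} (hv : v ≠ 0) :
    gaussianReal (m + c) v = (gaussianReal m v).withDensity
      fun t => ENNReal.ofReal (exp ((c * (t - m) - c * c / 2) / v)) := by
  rw [gaussianReal_of_var_ne_zero _ hv, gaussianReal_of_var_ne_zero _ hv,
    ← withDensity_mul _ (measurable_gaussianPDF _ _) (by fun_prop)]
  congr 1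
  ext t
  simp only [Pi.mul_apply, gaussianPDF]
  rw [← ENNReal.ofReal_mul (gaussianPDFReal_nonneg _ _ _),
    gaussianPDFReal, gaussianPDFReal, mul_assoc _ (rexp _), ← exp_add]
  congr 3
  field_simp
  ring

instance (d : ℕ) (m : Fin d → ℝ) (σ : ℝ) : IsProbabilityMeasure (gaussianVec m σ) := by
  unfold gaussianVec; infer_instance

theorem gaussianVec_add_eq_withDensity {d : ℕ} (x δ : Fin d → ℝ) {σ : ℝ} (hσ : σ ≠ 0) :
    gaussianVec (x + δ) σ = (gaussianVec x σ).withDensity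
      fun z => ENNReal.ofReal (exp ((dotp δ (z - x) - dotp δ δ / 2) / σ ^ 2)) := by
  have hv : ((σ ^ 2).toNNReal : ℝ) = σ ^ 2 := coe_toNNReal _ (sq_nonneg σ)
  have hv0 : (σ ^ 2).toNNReal ≠ 0 := by positivity
  simp only [gaussianVec, Pi.add_apply]
  rw [Measure.pi_eq_withDensity (by fun_prop)
    fun i => gaussianReal_add_eq_withDensity (x i) (δ i) hv0]
  congr 1
  ext z
  rw [← ENNReal.ofReal_prod_of_nonneg fun i _ => (exp_pos _).le, ← exp_sum]
  simp only [dotp, hv, Pi.sub_apply]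
  rw [← Finset.sum_div, Finset.sum_sub_distrib, ← Finset.sum_div]

section Pigeonhole

variable {α : Type*} [MeasurableSpace α] {μ : Measure α} {D : α → ℝ≥0∞} {A B : Set α}

theorem withDensity_union_le_mul (hA : MeasurableSet A) (hB : MeasurableSet B)
    (hAB : Disjoint A B) (hD : ∀ b ∈ B, ∀ a ∈ A, D b ≤ D a) (hμA : μ A ≠ ∞) {N : ℕ}
    (hN : μ (A ∪ B) ≤ N * μ A) :
    μ.withDensity D (A ∪ B) ≤ N * μ.withDensity D A := by
  rcases N with _ | M
  · rw [Nat.cast_zero, zero_mul, nonpos_iff_eq_zero] at hN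
    simp [withDensity_absolutelyContinuous μ D hN]
  set K := ⨅ a ∈ A, D a
  have hKA : K * μ A ≤ μ.withDensity D A := by
    rw [withDensity_apply _ hA, ← setLIntegral_const]
    exact setLIntegral_mono' hA fun a ha => iInf₂_le a ha
  have hKB : μ.withDensity D B ≤ K * μ B := by
    rw [withDensity_apply _ hB, ← setLIntegral_const]
    exact setLIntegral_mono' hB fun b hb => le_iInf₂ (hD b hb)
  have hμB : μ B ≤ M * μ A := by
    rw [measure_union hAB hB, Nat.cast_succ, add_one_mul, add_comm (_ * _)] at hN
    exact (ENNReal.add_le_add_iff_left hμA).1 hN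
  calc μ.withDensity D (A ∪ B) = μ.withDensity D A + μ.withDensity D B := measure_union hAB hB
    _ ≤ μ.withDensity D A + M * μ.withDensity D A := by
        gcongr
        calc μ.withDensity D B ≤ K * μ B := hKB
          _ ≤ K * (M * μ A) := by gcongr
          _ = M * (K * μ A) := by ring
          _ ≤ M * μ.withDensity D A := by gcongr
    _ = ((M + 1 : ℕ) : ℝ≥0∞) * μ.withDensity D A := by push_cast; ring

theorem toReal_union_div_ceil_le_of_eq_withDensity [IsFiniteMeasure μ] {ν : Measure α}
    [IsFiniteMeasure ν] (hν : ν = μ.withDensity D) (hA : MeasurableSet A)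
    (hB : MeasurableSet B) (hAB : Disjoint A B) (hD : ∀ b ∈ B, ∀ a ∈ A, D b ≤ D a)
    (hμA : 0 < (μ A).toReal) :
    (ν (A ∪ B)).toReal / ⌈(μ (A ∪ B)).toReal / (μ A).toReal⌉ ≤ (ν A).toReal := by
  set N := ⌈(μ (A ∪ B)).toReal / (μ A).toReal⌉₊
  have hratio : 0 < (μ (A ∪ B)).toReal / (μ A).toReal :=
    div_pos (hμA.trans_le (measureReal_mono Set.subset_union_left)) hμA
  have hN : μ (A ∪ B) ≤ N * μ A := by
    rw [← ENNReal.toReal_le_toReal (measure_ne_top _ _) (by finiteness), ENNReal.toReal_mul,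
      ENNReal.toReal_natCast]
    exact (div_le_iff₀ hμA).1 (Nat.le_ceil _)
  have hceil : ((⌈(μ (A ∪ B)).toReal / (μ A).toReal⌉ : ℤ) : ℝ) = N := by
    exact_mod_cast (Int.natCast_ceil_eq_ceil hratio.le).symm
  rw [hceil, div_le_iff₀' (Nat.cast_pos.2 (Nat.ceil_pos.2 hratio))]
  subst hν
  simpa [ENNReal.toReal_mul] using
    ENNReal.toReal_mono (by finiteness) (withDensity_union_le_mul hA hB hAB hD (by finiteness) hN)

end Pigeonhole

section Slab

variable {d : ℕ} (σ : ℝ) (x δ : Fin d → ℝ)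

theorem measurableSet_slab (a b : ℝ) : MeasurableSet (slab σ x δ a b) := by
  have : Measurable fun z : Fin d → ℝ => ((dotp δ (z - x) / (σ * l2norm δ) : ℝ) : EReal) := by
    unfold dotp
    fun_prop
  exact this measurableSet_Ioc

theorem slab_subset_union_slab (a b c : ℝ) :
    slab σ x δ a c ⊆ slab σ x δ a b ∪ slab σ x δ b c := by
  rintro z ⟨hlo, hhi⟩
  by_cases h : PhiInvE (1 - b) < ((dotp δ (z - x) / (σ * l2norm δ) : ℝ) : EReal)
  · exact Or.inl ⟨h, hhi⟩
  · exact Or.inr ⟨hlo, not_lt.1 h⟩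

theorem disjoint_slab (a b c : ℝ) : Disjoint (slab σ x δ a b) (slab σ x δ b c) :=
  Set.disjoint_left.2 fun _ hab hbc => (hab.1.trans_le hbc.2).false

theorem dotp_le_of_mem_slab (hσ : 0 ≤ σ) {a b c : ℝ} {z w : Fin d → ℝ}
    (hz : z ∈ slab σ x δ b c) (hw : w ∈ slab σ x δ a b) :
    dotp δ (z - x) ≤ dotp δ (w - x) := by
  have hlt := EReal.coe_lt_coe_iff.1 (hz.2.trans_lt hw.1)
  rcases (mul_nonneg hσ (sqrt_nonneg _) : 0 ≤ σ * l2norm δ).eq_or_lt with h0 | hpos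
  · -- `σ * l2norm δ = 0` makes both sides of `hlt` the junk value `_ / 0 = 0`
    simp [← h0] at hlt
  · exact ((div_lt_div_iff_of_pos_right hpos).1 hlt).le

end Slab

theorem slab_pigeonhole_bound_general
    {d : ℕ} (σ : ℝ) (hσ : 0 < σ)
    (x δ : Fin d → ℝ)
    (q1 q2 : ℝ)
    (n : ℕ) (e1 e2 : Fin n → ℝ)
    (C' : Set (Fin d → ℝ))
    (hC' : C' = slab σ x δ q1 q2 \ ⋃ i, slab σ x δ (e1 i) (e2 i))
    (rX rY : ℝ → ℝ → ℝ)
    (hrX : ∀ a b, rX a b = (gaussianVec x σ (C' ∩ slab σ x δ a b)).toReal)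
    (hrY : ∀ a b, rY a b = (gaussianVec (x + δ) σ (C' ∩ slab σ x δ a b)).toReal)
    (q2o : ℝ) (hpos : 0 < rX q1 q2o) :
    rY q1 q2 / (⌈rX q1 q2 / rX q1 q2o⌉ : ℝ) ≤ rY q1 q2o := by
  have hC'sub : C' ⊆ slab σ x δ q1 q2 := hC' ▸ Set.sdiff_subset
  have hC'meas : MeasurableSet C' :=
    hC' ▸ (measurableSet_slab ..).diff (.iUnion fun _ => measurableSet_slab ..)
  have hsplit : C' ∩ slab σ x δ q1 q2 = C' ∩ slab σ x δ q1 q2o ∪ C' ∩ slab σ x δ q2o q2 := by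
    rw [← Set.inter_union_distrib_left, Set.inter_eq_left.2 hC'sub,
      Set.inter_eq_left.2 (hC'sub.trans (slab_subset_union_slab ..))]
  rw [hrX] at hpos
  rw [hrX, hrX, hrY, hrY, hsplit]
  refine toReal_union_div_ceil_le_of_eq_withDensity (gaussianVec_add_eq_withDensity x δ hσ.ne')
    (hC'meas.inter (measurableSet_slab ..)) (hC'meas.inter (measurableSet_slab ..))
    ((disjoint_slab ..).mono Set.inter_subset_right Set.inter_subset_right) ?_ hpos
  intro z hz w hw
  gcongr
  exact dotp_le_of_mem_slab σ x δ hσ.le hz.2 hw.2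

/-- Lemma 9 of the paper: in the slab setting, for q₁ ≤ q₂° ≤ q₂ with
rₓ(q₁,q₂°) > 0, one has
r_y(q₁,q₂°) ≥ r_y(q₁,q₂) / ⌈rₓ(q₁,q₂)/rₓ(q₁,q₂°)⌉. -/
theorem slab_pigeonhole_bound
    {d : ℕ} (hd : 1 ≤ d) (σ : ℝ) (hσ : 0 < σ)
    (x δ : Fin d → ℝ) (hδ : δ ≠ 0)
    (q1 q2 : ℝ) (hq1 : 0 ≤ q1) (hq12 : q1 < q2) (hq2 : q2 ≤ 1)
    (n : ℕ) (e1 e2 : Fin n → ℝ)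
    (he : ∀ i, q1 ≤ e1 i ∧ e1 i ≤ e2 i ∧ e2 i ≤ q2)
    (C' : Set (Fin d → ℝ))
    (hC' : C' = slab σ x δ q1 q2 \ ⋃ i, slab σ x δ (e1 i) (e2 i))
    (rX rY : ℝ → ℝ → ℝ)
    (hrX : ∀ a b, rX a b = (gaussianVec x σ (C' ∩ slab σ x δ a b)).toReal)
    (hrY : ∀ a b, rY a b = (gaussianVec (x + δ) σ (C' ∩ slab σ x δ a b)).toReal)
    (q2o : ℝ) (hq2o : q1 ≤ q2o ∧ q2o ≤ q2) (hpos : 0 < rX q1 q2o) :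
    rY q1 q2 / (⌈rX q1 q2 / rX q1 q2o⌉ : ℝ) ≤ rY q1 q2o :=
  slab_pigeonhole_bound_general σ hσ x δ q1 q2 n e1 e2 C' hC' rX rY hrX hrY q2o hpos
end
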